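/- Let G be a disconnected d-distinguishing critical graph (d ≥ 3) with c(G) connected components all isomorphic to H. Then c(G) > D(H, D(H)), the number of inequivalent distinguishing labelings of H using D(H) labels. -/

import Mathlib

/-- A labeling with `r` labels is distinguishing if the only automorphism
preserving all labels is the identity. -/
def IsDistinguishing {V : Type*} (G : SimpleGraph V) (r : ℕ) (f : V → Fin r) : Prop :=
  ∀ φ : G ≃g G, (∀ v, f (φ v) = f v) → ∀ v, φ v = v

/-- The distinguishing number of a graph. -/
noncomputable def distNum {V : Type*} (G : SimpleGraph V) : ℕ :=
  sInf {r : ℕ | ∃ f : V → Fin r, IsDistinguishing G r f}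

/-- A graph is `d`-distinguishing critical if its distinguishing number is `d`
and no proper induced subgraph has distinguishing number `d`. -/
def DistCritical {V : Type*} (G : SimpleGraph V) (d : ℕ) : Prop :=
  distNum G = d ∧ ∀ s : Set V, s ≠ Set.univ → distNum (G.induce s) ≠ d

/-- The disjoint union of `c` copies of a graph `H`. -/
def copies {W : Type*} (c : ℕ) (H : SimpleGraph W) : SimpleGraph (Fin c × W) where
  Adj a b := a.1 = b.1 ∧ H.Adj a.2 b.2
  symm := ⟨fun a b h => ⟨h.1.symm, h.2.symm⟩⟩
  loopless := ⟨fun a h => H.irrefl h.2⟩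

/-- `numDistLab G k` is the number of inequivalent `k`-distinguishing labelings of `G`,
two labelings being equivalent when some automorphism of `G` maps one to the other. -/
noncomputable def numDistLab {V : Type*} (G : SimpleGraph V) (k : ℕ) : ℕ :=
  Nat.card (Quot (fun f g : {f : V → Fin k // IsDistinguishing G k f} =>
    ∃ φ : G ≃g G, ∀ v, f.1 (φ v) = g.1 v))

/-!
If `c ≤ D(H, D(H))`, label the `c` copies of `H` by pairwise inequivalent distinguishing
`D(H)`-labelings. An automorphism of `G ≅ c·H` permutes the copies (`H` is connected), and
preserving the labels forces it to fix every copy, because the labelings are inequivalent, and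
then to be the identity on it. So `D(G) ≤ D(H)`, and restricting a labeling of `G` to one copy
gives `D(H) ≤ D(G)`. A single copy of `H` is then a proper induced subgraph (`c ≥ 2`) with
distinguishing number `d`, contradicting criticality.
-/

section distNum

variable {V V' : Type*} {G : SimpleGraph V} {G' : SimpleGraph V'} {r : ℕ}

lemma IsDistinguishing.comp_iso (e : G ≃g G') {f : V' → Fin r}
    (hf : IsDistinguishing G' r f) : IsDistinguishing G r (f ∘ e) := by
  intro φ hφ v
  simpa using hf (e.symm.trans (φ.trans e)) (fun u => by simpa using hφ (e.symm u)) (e v)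

lemma distNum_congr (e : G ≃g G') : distNum G = distNum G' := by
  unfold distNum
  congr 1
  ext r
  exact ⟨fun ⟨f, hf⟩ => ⟨f ∘ e.symm, hf.comp_iso e.symm⟩, fun ⟨f, hf⟩ => ⟨f ∘ e, hf.comp_iso e⟩⟩

lemma isDistinguishing_of_injective {f : V → Fin r} (hf : Function.Injective f) :
    IsDistinguishing G r f :=
  fun _ hφ v => hf (hφ v)

lemma distNum_le {f : V → Fin r} (hf : IsDistinguishing G r f) : distNum G ≤ r :=
  Nat.sInf_le ⟨f, hf⟩

lemma exists_isDistinguishing_distNum [Finite V] (G : SimpleGraph V) :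
    ∃ f : V → Fin (distNum G), IsDistinguishing G (distNum G) f := by
  have e := Finite.equivFin V
  exact Nat.sInf_mem (s := {r | ∃ f : V → Fin r, IsDistinguishing G r f})
    ⟨_, e, isDistinguishing_of_injective e.injective⟩

end distNum

namespace copies

variable {W : Type*} {c : ℕ} {H : SimpleGraph W}

lemma fst_eq_of_reachable {a b : Fin c × W} (h : (copies c H).Reachable a b) : a.1 = b.1 := by
  obtain ⟨p⟩ := h
  induction p with
  | nil => rfl
  | cons h _ ih => exact h.1.trans ih

lemma reachable_of_connected (hH : H.Connected) (i : Fin c) (w w' : W) :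
    (copies c H).Reachable (i, w) (i, w') :=
  (hH.preconnected w w').map (⟨fun w => (i, w), fun h => ⟨rfl, h⟩⟩ : H →g copies c H)

lemma fst_iso_apply_eq (hH : H.Connected) (Φ : copies c H ≃g copies c H) (i : Fin c)
    (w w' : W) : (Φ (i, w)).1 = (Φ (i, w')).1 :=
  fst_eq_of_reachable ((reachable_of_connected hH i w w').map Φ.toHom)

/-- Since `H` is connected, `Φ` maps the `i`-th copy onto a single copy; this is the resulting
automorphism of `H`. -/
def componentAut (hH : H.Connected) (Φ : copies c H ≃g copies c H) (i : Fin c) : H ≃g H where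
  toFun w := (Φ (i, w)).2
  invFun w := (Φ.symm ((Φ (i, w)).1, w)).2
  left_inv w := by
    simp only
    rw [fst_iso_apply_eq hH Φ i _ w]
    simp
  right_inv w := by
    have h : (Φ.symm ((Φ (i, w)).1, w)).1 = i := by
      rw [fst_iso_apply_eq hH Φ.symm _ w (Φ (i, w)).2]
      simp
    change (Φ (i, (Φ.symm ((Φ (i, w)).1, w)).2)).2 = w
    rw [show (i, _) = Φ.symm ((Φ (i, w)).1, w) from Prod.ext h.symm rfl]
    simp
  map_rel_iff' {a b} := by
    change H.Adj (Φ (i, a)).2 (Φ (i, b)).2 ↔ H.Adj a b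
    have hΦ := Φ.map_rel_iff (a := (i, a)) (b := (i, b))
    exact ⟨fun h => (hΦ.mp ⟨fst_iso_apply_eq hH Φ i a b, h⟩).2, fun h => (hΦ.mpr ⟨rfl, h⟩).2⟩

lemma iso_apply_eq (hH : H.Connected) (Φ : copies c H ≃g copies c H) (i : Fin c) (w u : W) :
    Φ (i, u) = ((Φ (i, w)).1, componentAut hH Φ i u) :=
  Prod.ext (fst_iso_apply_eq hH Φ i u w) rfl

def extendAut (i : Fin c) (ψ : H ≃g H) : copies c H ≃g copies c H where
  toFun p := (p.1, if p.1 = i then ψ p.2 else p.2)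
  invFun p := (p.1, if p.1 = i then ψ.symm p.2 else p.2)
  left_inv := by rintro ⟨j, w⟩; by_cases h : j = i <;> simp [h]
  right_inv := by rintro ⟨j, w⟩; by_cases h : j = i <;> simp [h]
  map_rel_iff' {a b} := by
    change (a.1 = b.1 ∧ _) ↔ (a.1 = b.1 ∧ _)
    refine and_congr_right fun hab => ?_
    by_cases h : a.1 = i <;> simp [← hab, h, ψ.map_adj_iff]

lemma extendAut_apply_self (i : Fin c) (ψ : H ≃g H) (w : W) :
    extendAut i ψ (i, w) = (i, ψ w) := by
  simp [extendAut]

lemma extendAut_apply_of_ne {i j : Fin c} (h : j ≠ i) (ψ : H ≃g H) (w : W) :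
    extendAut i ψ (j, w) = (j, w) := by
  simp [extendAut, h]

def induceIso (i : Fin c) : (copies c H).induce {p | p.1 = i} ≃g H where
  toFun p := p.1.2
  invFun w := ⟨(i, w), rfl⟩
  left_inv p := Subtype.ext (Prod.ext p.2.symm rfl)
  right_inv _ := rfl
  map_rel_iff' {a b} := ⟨fun h => ⟨a.2.trans b.2.symm, h⟩, fun h => h.2⟩

end copies

section labelings

open copies

variable {W : Type*} {c k : ℕ} {H : SimpleGraph W}

lemma IsDistinguishing.of_copies {F : Fin c × W → Fin k}
    (hF : IsDistinguishing (copies c H) k F) (i : Fin c) :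
    IsDistinguishing H k (fun w => F (i, w)) := by
  intro ψ hψ u
  have hext : ∀ p, F (extendAut i ψ p) = F p := by
    rintro ⟨j, w⟩
    by_cases h : j = i
    · subst h
      rw [extendAut_apply_self]
      exact hψ w
    · rw [extendAut_apply_of_ne h]
  simpa [extendAut_apply_self] using congrArg Prod.snd (hF _ hext (i, u))

lemma distNum_le_distNum_copies [Finite W] (i : Fin c) : distNum H ≤ distNum (copies c H) :=
  let ⟨_, hF⟩ := exists_isDistinguishing_distNum (copies c H)
  distNum_le (hF.of_copies i)

lemma isDistinguishing_copies (hH : H.Connected) (ℓ : Fin c → W → Fin k)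
    (hℓ : ∀ i, IsDistinguishing H k (ℓ i))
    (hinj : ∀ i j, (∃ φ : H ≃g H, ∀ v, ℓ i (φ v) = ℓ j v) → i = j) :
    IsDistinguishing (copies c H) k (fun p => ℓ p.1 p.2) := by
  rintro Φ hΦ ⟨i, w⟩
  have hcomm (u : W) : ℓ (Φ (i, w)).1 (componentAut hH Φ i u) = ℓ i u := by
    simpa only [iso_apply_eq hH Φ i w u] using hΦ (i, u)
  have hj : (Φ (i, w)).1 = i := hinj _ _ ⟨_, hcomm⟩
  have hfix := hℓ i (componentAut hH Φ i) (fun u => by simpa only [hj] using hcomm u) w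
  rw [iso_apply_eq hH Φ i w w, hj, hfix]

lemma distNum_copies_le_of_le_numDistLab [Finite W] (hH : H.Connected)
    (h : c ≤ numDistLab H k) : distNum (copies c H) ≤ k := by
  let Q := Quot (fun f g : {f : W → Fin k // IsDistinguishing H k f} =>
    ∃ φ : H ≃g H, ∀ v, f.1 (φ v) = g.1 v)
  have : Fintype Q := Fintype.ofFinite Q
  obtain ⟨g⟩ : Nonempty (Fin c ↪ Q) := Function.Embedding.nonempty_of_card_le <| by
    rwa [Fintype.card_fin, ← Nat.card_eq_fintype_card]
  refine distNum_le (isDistinguishing_copies hH (fun i => (g i).out.1) (fun i => (g i).out.2) ?_)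
  intro i j hij
  apply g.injective
  rw [← Quot.out_eq (g i), ← Quot.out_eq (g j)]
  exact Quot.sound hij

end labelings

theorem stmt14_general {V W : Type*} [Fintype W] (G : SimpleGraph V)
    (H : SimpleGraph W) (d c : ℕ) (hc : 2 ≤ c)
    (hH : H.Connected) (hiso : Nonempty (G ≃g copies c H))
    (hcrit : DistCritical G d) :
    numDistLab H (distNum H) < c := by
  obtain ⟨e⟩ := hiso
  obtain ⟨w⟩ := hH.nonempty
  let i₀ : Fin c := ⟨0, by omega⟩
  by_contra hlt
  have hk : distNum (copies c H) = distNum H :=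
    le_antisymm (distNum_copies_le_of_le_numDistLab hH (not_lt.mp hlt))
      (distNum_le_distNum_copies i₀)
  let t := {p : Fin c × W | p.1 = i₀}
  have hproper : e.symm '' t ≠ Set.univ := fun h => by
    have : e.symm (⟨1, by omega⟩, w) ∈ e.symm '' t := h ▸ trivial
    simp [t, i₀] at this
  apply hcrit.2 _ hproper
  calc distNum (G.induce (e.symm '' t))
      = distNum H :=
        distNum_congr ((e.symm.induce e.symm.injective.injOn.bijOn_image).symm.trans
          (copies.induceIso i₀))
    _ = distNum (copies c H) := hk.symm
    _ = d := (distNum_congr e).symm.trans hcrit.1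

theorem stmt14 {V W : Type*} [Fintype V] [Fintype W] (G : SimpleGraph V)
    (H : SimpleGraph W) (d c : ℕ) (hd : 3 ≤ d) (hc : 2 ≤ c)
    (hH : H.Connected) (hiso : Nonempty (G ≃g copies c H))
    (hcrit : DistCritical G d) :
    numDistLab H (distNum H) < c :=
  stmt14_general G H d c hc hH hiso hcrit
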